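/- For every u ∈ ℂ \ 𝕌 there exist φ ∈ ℝ and ρ > 1 such that R_u(ζ) = (ζ − ρ e^{iφ})(ζ − e^{−2iφ})(ζ − ρ^{−1} e^{iφ}) for all ζ ∈ ℂ; that is, the roots of R_u are ρ e^{iφ}, e^{−2iφ}, and ρ^{−1} e^{iφ}. -/

import Mathlib

/-!
The roots of `R_u` have product `1` and are permuted by the reflection `z ↦ (conj z)⁻¹` in the
unit circle. If a root `x = ρ e^{iφ}` leaves the circle, `x` and its reflection `ρ⁻¹ e^{iφ}` are
two distinct roots, and the product forces the third to be `e^{-2iφ}`.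

If all three roots lie on the circle, the discriminant of the cubic, a real function of
`w = conj u / 6`, is `≤ 0`. It becomes positive far out along the ray through `w`, so by the
intermediate value theorem it vanishes at `r w` for some `r ≥ 1`. The double root `A` of that
cubic is unimodular (its reflection is again a root), so `r w = 2 A + A⁻² = 2 e^{iφ} + e^{-2iφ}`
lies on the deltoid and `u ∈ 𝕌`.
-/

/-- The cubic encoding the stationary points of the NV phase at positive energy. -/
noncomputable def Rcubic (u ζ : ℂ) : ℂ :=
  ζ ^ 3 - ((starRingEnd ℂ u) / 6) * ζ ^ 2 + (u / 6) * ζ - 1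

/-- The region `𝕌` enclosed by the curve `𝒰`. -/
def regionU : Set ℂ :=
  {w : ℂ | ∃ s : ℝ, s ∈ Set.Icc (0 : ℝ) 1 ∧ ∃ φ : ℝ,
    w = 6 * (s : ℂ) * (2 * Complex.exp (-(Complex.I * (φ : ℂ))) + Complex.exp (2 * Complex.I * (φ : ℂ)))}

open Complex ComplexConjugate

theorem Complex.norm_eq_one_of_conj_inv_eq {z : ℂ} (hz : z ≠ 0) (h : (conj z)⁻¹ = z) :
    ‖z‖ = 1 := by
  have hmul : z * conj z = 1 := by
    rw [mul_comm]; exact (mul_eq_one_iff_inv_eq₀ (by simpa using hz)).mpr h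
  rw [mul_conj'] at hmul
  exact (pow_eq_one_iff_of_nonneg (norm_nonneg z) two_ne_zero).mp (by exact_mod_cast hmul)

theorem Complex.conj_inv_eq_norm_inv_mul_exp (x : ℂ) :
    (conj x)⁻¹ = (‖x‖ : ℂ)⁻¹ * exp (I * arg x) := by
  nth_rw 1 [← norm_mul_exp_arg_mul_I x]
  rw [map_mul, ← exp_conj, conj_ofReal, map_mul, conj_ofReal, conj_I, mul_inv, ← exp_neg]
  ring_nf

theorem Complex.conj_div_self_eq_exp {x : ℂ} (hx : x ≠ 0) :
    conj x / x = exp (-(2 * I * arg x)) := by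
  have hn : (‖x‖ : ℂ) ≠ 0 := by simpa using hx
  rw [← inv_div, div_eq_mul_inv, conj_inv_eq_norm_inv_mul_exp, exp_neg, mul_assoc 2, two_mul,
    exp_add]
  nth_rw 1 [← norm_mul_exp_arg_mul_I x]
  field_simp

theorem exists_vieta_cubic {K : Type*} [Field K] [IsAlgClosed K] (p q t : K) :
    ∃ a b c : K, a + b + c = p ∧ a * b + b * c + c * a = q ∧ a * b * c = t := by
  set P : Cubic K := ⟨1, -p, q, -t⟩
  have hP : P.a ≠ 0 := one_ne_zero
  obtain ⟨a, b, c, hroots⟩ :=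
    (Cubic.splits_iff_roots_eq_three hP).mp (IsAlgClosed.splits (P.toPoly.map (RingHom.id K)))
  have hb := Cubic.b_eq_three_roots hP hroots
  have hc := Cubic.c_eq_three_roots hP hroots
  have hd := Cubic.d_eq_three_roots hP hroots
  simp only [P, RingHom.id_apply] at hb hc hd
  exact ⟨a, b, c, by linear_combination hb, by linear_combination -hc, by linear_combination hd⟩

theorem cubic_eq_mul_of_two_roots {K : Type*} [Field K] {p q x y : K} (hx0 : x ≠ 0)
    (hy0 : y ≠ 0) (hxy : x ≠ y) (hx : x ^ 3 - p * x ^ 2 + q * x - 1 = 0)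
    (hy : y ^ 3 - p * y ^ 2 + q * y - 1 = 0) (ζ : K) :
    ζ ^ 3 - p * ζ ^ 2 + q * ζ - 1 = (ζ - x) * (ζ - y) * (ζ - (x * y)⁻¹) := by
  set z := (x * y)⁻¹
  have hxyz : x * y * z = 1 := mul_inv_cancel₀ (mul_ne_zero hx0 hy0)
  set α := x + y + z - p
  set β := q - (x * y + y * z + z * x)
  have hdiff : ∀ ζ : K, ζ ^ 3 - p * ζ ^ 2 + q * ζ - 1
      = (ζ - x) * (ζ - y) * (ζ - z) + ζ * (α * ζ + β) := fun ζ => by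
    linear_combination hxyz
  have hαx : α * x + β = 0 := by
    have := hdiff x
    simpa [hx, hx0] using this.symm
  have hαy : α * y + β = 0 := by
    have := hdiff y
    simpa [hy, hy0] using this.symm
  have hα : α = 0 := by
    have : α * (x - y) = 0 := by linear_combination hαx - hαy
    exact (mul_eq_zero.mp this).resolve_right (sub_ne_zero.mpr hxy)
  have hβ : β = 0 := by rwa [hα, zero_mul, zero_add] at hαx
  rw [hdiff ζ, hα, hβ]
  ring

noncomputable def selfInvCubic (w ζ : ℂ) : ℂ := ζ ^ 3 - w * ζ ^ 2 + conj w * ζ - 1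

/-- The discriminant of `selfInvCubic w` (a real number). -/
noncomputable def deltoidDisc (w : ℂ) : ℝ := ‖w‖ ^ 4 - 8 * (w ^ 3).re + 18 * ‖w‖ ^ 2 - 27

noncomputable def deltoid (φ : ℝ) : ℂ := 2 * exp (I * φ) + exp (-(2 * I * φ))

theorem Rcubic_eq_selfInvCubic (u : ℂ) : Rcubic u = selfInvCubic (conj u / 6) := by
  funext ζ
  simp [Rcubic, selfInvCubic, map_div₀, map_ofNat]

namespace selfInvCubic

variable {w : ℂ}

theorem eq_mul {a b c : ℂ} (h1 : a + b + c = w) (h2 : a * b + b * c + c * a = conj w)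
    (h3 : a * b * c = 1) (ζ : ℂ) : selfInvCubic w ζ = (ζ - a) * (ζ - b) * (ζ - c) := by
  rw [selfInvCubic, ← h2, ← h1]
  linear_combination h3

theorem eq_zero_iff {a b c : ℂ} (h1 : a + b + c = w) (h2 : a * b + b * c + c * a = conj w)
    (h3 : a * b * c = 1) {z : ℂ} : selfInvCubic w z = 0 ↔ z = a ∨ z = b ∨ z = c := by
  simp [eq_mul h1 h2 h3, sub_eq_zero, or_assoc]

theorem ne_zero_of_eq_zero {z : ℂ} (hz : selfInvCubic w z = 0) : z ≠ 0 := by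
  rintro rfl
  simp [selfInvCubic] at hz

theorem conj_inv_eq_zero {z : ℂ} (hz : selfInvCubic w z = 0) :
    selfInvCubic w (conj z)⁻¹ = 0 := by
  have hz0 : conj z ≠ 0 := by simpa using ne_zero_of_eq_zero hz
  have key : selfInvCubic w (conj z)⁻¹ * conj z ^ 3 = -conj (selfInvCubic w z) := by
    simp only [selfInvCubic, map_sub, map_add, map_mul, map_pow, map_one, conj_conj]
    field_simp
    ring
  rw [hz, map_zero, neg_zero] at key
  exact (mul_eq_zero.mp key).resolve_right (pow_ne_zero _ hz0)

theorem exists_one_lt_norm {z : ℂ} (hz : selfInvCubic w z = 0) (h1 : ‖z‖ ≠ 1) :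
    ∃ y, selfInvCubic w y = 0 ∧ 1 < ‖y‖ := by
  rcases h1.lt_or_gt with hlt | hgt
  · refine ⟨(conj z)⁻¹, conj_inv_eq_zero hz, ?_⟩
    rw [norm_inv, norm_conj]
    exact (one_lt_inv₀ (norm_pos_iff.mpr (ne_zero_of_eq_zero hz))).mpr hlt
  · exact ⟨z, hz, hgt⟩

theorem eq_mul_of_norm_ne_one {z : ℂ} (hz : selfInvCubic w z = 0) (h1 : ‖z‖ ≠ 1) (ζ : ℂ) :
    selfInvCubic w ζ = (ζ - z) * (ζ - (conj z)⁻¹) * (ζ - conj z / z) := by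
  have hz0 := ne_zero_of_eq_zero hz
  have hne : z ≠ (conj z)⁻¹ := fun h => h1 (norm_eq_one_of_conj_inv_eq hz0 h.symm)
  rw [selfInvCubic, cubic_eq_mul_of_two_roots hz0 (by simpa using hz0) hne hz
    (conj_inv_eq_zero hz), mul_inv, inv_inv]
  ring

end selfInvCubic

theorem conj_deltoid (φ : ℝ) : conj (deltoid φ) = 2 * exp (-(I * φ)) + exp (2 * I * φ) := by
  simp only [deltoid, map_add, map_mul, ← exp_conj, map_neg, conj_I, conj_ofReal, map_ofNat]
  ring_nf

theorem sq_prod_sub_eq_deltoidDisc {w a b c : ℂ} (h1 : a + b + c = w)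
    (h2 : a * b + b * c + c * a = conj w) (h3 : a * b * c = 1) :
    ((a - b) * (b - c) * (c - a)) ^ 2 = deltoidDisc w := by
  have hdisc : ((a - b) * (b - c) * (c - a)) ^ 2
      = 18 * (a + b + c) * (a * b + b * c + c * a) * (a * b * c)
        - 4 * (a + b + c) ^ 3 * (a * b * c) + (a + b + c) ^ 2 * (a * b + b * c + c * a) ^ 2
        - 4 * (a * b + b * c + c * a) ^ 3 - 27 * (a * b * c) ^ 2 := by
    ring
  have hnorm : w * conj w = (‖w‖ : ℂ) ^ 2 := mul_conj' w
  have hre : w ^ 3 + conj w ^ 3 = (2 * (w ^ 3).re : ℝ) := by rw [← map_pow]; exact add_conj _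
  rw [hdisc, h1, h2, h3, deltoidDisc]
  push_cast at hre ⊢
  linear_combination (18 + w * conj w + (‖w‖ : ℂ) ^ 2) * hnorm - 4 * hre

theorem deltoidDisc_nonpos {w a b c : ℂ} (h1 : a + b + c = w)
    (h2 : a * b + b * c + c * a = conj w) (h3 : a * b * c = 1)
    (ha : ‖a‖ = 1) (hb : ‖b‖ = 1) (hc : ‖c‖ = 1) : deltoidDisc w ≤ 0 := by
  have hca : conj a = b * c := by
    rw [← inv_eq_conj ha]; exact inv_eq_of_mul_eq_one_right (by linear_combination h3)
  have hcb : conj b = c * a := by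
    rw [← inv_eq_conj hb]; exact inv_eq_of_mul_eq_one_right (by linear_combination h3)
  have hcc : conj c = a * b := by
    rw [← inv_eq_conj hc]; exact inv_eq_of_mul_eq_one_right (by linear_combination h3)
  set P := (a - b) * (b - c) * (c - a)
  have hconj : conj P = -P := by
    simp only [P, map_mul, map_sub, hca, hcb, hcc]
    linear_combination (-(a - b) * (b - c) * (c - a)) * h3
  have hP : (deltoidDisc w : ℂ) = -(‖P‖ : ℂ) ^ 2 := by
    rw [← sq_prod_sub_eq_deltoidDisc h1 h2 h3, ← mul_conj', hconj]
    ring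
  have hP' : deltoidDisc w = -‖P‖ ^ 2 := by exact_mod_cast hP
  rw [hP']
  exact neg_nonpos.mpr (sq_nonneg _)

theorem deltoidDisc_pos {w : ℂ} (h : 9 ≤ ‖w‖) : 0 < deltoidDisc w := by
  have hre : (w ^ 3).re ≤ ‖w‖ ^ 3 := by rw [← norm_pow]; exact re_le_norm _
  rw [deltoidDisc]
  nlinarith [pow_le_pow_left₀ (by norm_num) h 3, sq_nonneg ‖w‖]

theorem exists_eq_deltoid_of_double_root {w A C : ℂ} (h1 : A + A + C = w)
    (h2 : A * A + A * C + C * A = conj w) (h3 : A * A * C = 1) : ∃ φ : ℝ, w = deltoid φ := by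
  have hroot : selfInvCubic w A = 0 := (selfInvCubic.eq_zero_iff h1 h2 h3).mpr (Or.inl rfl)
  have hA0 := selfInvCubic.ne_zero_of_eq_zero hroot
  have hC : C = (A * A)⁻¹ := eq_inv_of_mul_eq_one_left (by linear_combination h3)
  -- the reflected root `(conj A)⁻¹` is again `A` or it is `C`; either way `A` is unimodular
  have hnorm : ‖A‖ = 1 := by
    rcases (selfInvCubic.eq_zero_iff h1 h2 h3).mp (selfInvCubic.conj_inv_eq_zero hroot) with
      h | h | h
    · exact norm_eq_one_of_conj_inv_eq hA0 h
    · exact norm_eq_one_of_conj_inv_eq hA0 h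
    · rw [hC, inv_inj] at h
      have h' := congrArg norm h
      rw [norm_conj, norm_mul] at h'
      exact (mul_eq_left₀ (norm_ne_zero_iff.mpr hA0)).mp h'.symm
  obtain ⟨φ, rfl⟩ : ∃ φ : ℝ, A = exp (I * φ) := ⟨arg A, by
    nth_rw 1 [← norm_mul_exp_arg_mul_I A]
    rw [hnorm, ofReal_one, one_mul, mul_comm]⟩
  refine ⟨φ, ?_⟩
  rw [← h1, hC, deltoid, ← exp_add, ← exp_neg]
  ring_nf

theorem exists_eq_deltoid_of_deltoidDisc_eq_zero {w : ℂ} (h : deltoidDisc w = 0) :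
    ∃ φ : ℝ, w = deltoid φ := by
  obtain ⟨a, b, c, h1, h2, h3⟩ := exists_vieta_cubic w (conj w) 1
  have hP : (a - b) * (b - c) * (c - a) = 0 := by
    have := sq_prod_sub_eq_deltoidDisc h1 h2 h3
    rwa [h, ofReal_zero, sq_eq_zero_iff] at this
  simp only [mul_eq_zero, sub_eq_zero] at hP
  rcases hP with (rfl | rfl) | rfl
  · exact exists_eq_deltoid_of_double_root h1 (by linear_combination h2) h3
  · exact exists_eq_deltoid_of_double_root (A := b) (C := a) (by linear_combination h1)
      (by linear_combination h2) (by linear_combination h3)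
  · exact exists_eq_deltoid_of_double_root (A := c) (C := b) (by linear_combination h1)
      (by linear_combination h2) (by linear_combination h3)

theorem exists_eq_smul_deltoid_of_deltoidDisc_nonpos {w : ℂ} (h : deltoidDisc w ≤ 0) :
    ∃ s ∈ Set.Icc (0 : ℝ) 1, ∃ φ : ℝ, w = s * deltoid φ := by
  rcases eq_or_ne w 0 with rfl | hw
  · exact ⟨0, ⟨le_rfl, zero_le_one⟩, 0, by simp⟩
  set R := max 1 (9 / ‖w‖)
  have hR : 9 ≤ ‖(R : ℂ) * w‖ := by
    rw [norm_mul, norm_real, Real.norm_of_nonneg (by positivity)]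
    calc 9 = 9 / ‖w‖ * ‖w‖ := (div_mul_cancel₀ _ (norm_ne_zero_iff.mpr hw)).symm
      _ ≤ R * ‖w‖ := by gcongr; exact le_max_right _ _
  have hcont : ContinuousOn (fun r : ℝ => deltoidDisc (r * w)) (Set.Icc 1 R) := by
    unfold deltoidDisc; fun_prop
  obtain ⟨r, ⟨hr1, -⟩, hr⟩ := intermediate_value_Icc (le_max_left _ _) hcont
    ⟨by simpa using h, (deltoidDisc_pos hR).le⟩
  obtain ⟨φ, hφ⟩ := exists_eq_deltoid_of_deltoidDisc_eq_zero hr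
  have hr0 : (r : ℂ) ≠ 0 := by exact_mod_cast (zero_lt_one.trans_le hr1).ne'
  refine ⟨r⁻¹, ⟨by positivity, inv_le_one_of_one_le₀ hr1⟩, φ, ?_⟩
  rw [ofReal_inv, ← hφ, inv_mul_cancel_left₀ hr0]

theorem mem_regionU_of_deltoidDisc_nonpos {u : ℂ} (h : deltoidDisc (conj u / 6) ≤ 0) :
    u ∈ regionU := by
  obtain ⟨s, hs, φ, hw⟩ := exists_eq_smul_deltoid_of_deltoidDisc_nonpos h
  refine ⟨s, hs, φ, ?_⟩
  have := congrArg conj hw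
  rw [map_div₀, conj_conj, map_ofNat, map_mul, conj_ofReal, conj_deltoid] at this
  linear_combination 6 * this

theorem stmt6 (u : ℂ) (hu : u ∉ regionU) :
    ∃ (φ : ℝ) (ρ : ℝ), 1 < ρ ∧
      ∀ ζ : ℂ, Rcubic u ζ
        = (ζ - (ρ : ℂ) * Complex.exp (Complex.I * (φ : ℂ)))
          * (ζ - Complex.exp (-(2 * Complex.I * (φ : ℂ))))
          * (ζ - (ρ : ℂ)⁻¹ * Complex.exp (Complex.I * (φ : ℂ))) := by
  set w := conj u / 6
  obtain ⟨a, b, c, h1, h2, h3⟩ := exists_vieta_cubic w (conj w) 1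
  by_cases hcirc : ‖a‖ = 1 ∧ ‖b‖ = 1 ∧ ‖c‖ = 1
  · exact absurd (mem_regionU_of_deltoidDisc_nonpos
      (deltoidDisc_nonpos h1 h2 h3 hcirc.1 hcirc.2.1 hcirc.2.2)) hu
  · obtain ⟨z, hz, hz1⟩ : ∃ z, selfInvCubic w z = 0 ∧ ‖z‖ ≠ 1 := by
      simp only [not_and_or] at hcirc
      rcases hcirc with h | h | h <;>
        exact ⟨_, (selfInvCubic.eq_zero_iff h1 h2 h3).mpr (by simp), h⟩
    obtain ⟨x, hx, hx1⟩ := selfInvCubic.exists_one_lt_norm hz hz1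
    refine ⟨arg x, ‖x‖, hx1, fun ζ => ?_⟩
    rw [Rcubic_eq_selfInvCubic, selfInvCubic.eq_mul_of_norm_ne_one hx hx1.ne',
      conj_inv_eq_norm_inv_mul_exp, conj_div_self_eq_exp (selfInvCubic.ne_zero_of_eq_zero hx)]
    nth_rw 1 [← norm_mul_exp_arg_mul_I x]
    ring_nf
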